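/- (Convergence of optimal densities as the temporal penalty vanishes.) Suppose in addition that φ is continuous at 0 and let p ∈ (1,∞). For each λ > 0 let ρ^λ be the unique optimal density for Mod^λ_{p,σ}(Γ) (the unique N_λ-admissible density attaining the modulus), and let ρ̌ be the unique optimal density for Mod_{p,σ}(Γ̌). Then ρ^λ → ρ̌ (in ℝ^E) as λ → 0⁺. -/

import Mathlib

open Finset

noncomputable section

/-- A density `ρ` is admissible for the usage matrix `N` if it is nonnegative and
every object has `ρ`-length at least 1. -/
def IsAdmissible {E Γ : Type*} [Fintype E] (N : Γ → E → ℝ) (ρ : E → ℝ) : Prop :=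
  (∀ e, 0 ≤ ρ e) ∧ ∀ γ : Γ, 1 ≤ ∑ e, N γ e * ρ e

/-- The `p`-energy of a density. -/
def pEnergy {E : Type*} [Fintype E] (σ : E → ℝ) (p : ℝ) (ρ : E → ℝ) : ℝ :=
  ∑ e, σ e * ρ e ^ p

/-- The `p`-modulus: the infimum of the `p`-energy over admissible densities. -/
def pModulus {E Γ : Type*} [Fintype E] (N : Γ → E → ℝ) (σ : E → ℝ) (p : ℝ) : ℝ :=
  sInf {x | ∃ ρ : E → ℝ, IsAdmissible N ρ ∧ x = pEnergy σ p ρ}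

/-!
Since `φ ≥ 1` on `[0, ∞)`, the static optimum `ρ̌` is admissible for every penalized problem, so the
energies of the `ρ^λ` are bounded by `Mod_{p,σ}(Γ̌)` and the `ρ^λ` stay in a compact box. A cluster
point of `ρ^λ` as `λ → 0⁺` is `Ň`-admissible, because `N_λ → Ň` and admissibility is a closed
condition, and its energy is at most `Mod_{p,σ}(Γ̌)`; strict convexity of the energy for `p > 1`
then forces it to be `ρ̌`.
-/

open Filter Topology

def IsOptimalDensity {E Γ : Type*} [Fintype E] (N : Γ → E → ℝ) (σ : E → ℝ) (p : ℝ)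
    (ρ : E → ℝ) : Prop :=
  IsAdmissible N ρ ∧ pEnergy σ p ρ = pModulus N σ p

section Modulus

variable {E Γ : Type*} [Fintype E] {N N' : Γ → E → ℝ} {σ : E → ℝ} {p : ℝ} {ρ ρ' : E → ℝ}

lemma pEnergy_nonneg (hσ : ∀ e, 0 ≤ σ e) (hρ : ∀ e, 0 ≤ ρ e) : 0 ≤ pEnergy σ p ρ :=
  sum_nonneg fun e _ => mul_nonneg (hσ e) (Real.rpow_nonneg (hρ e) p)

lemma pModulus_le_pEnergy (hσ : ∀ e, 0 ≤ σ e) (hρ : IsAdmissible N ρ) :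
    pModulus N σ p ≤ pEnergy σ p ρ := by
  refine csInf_le ⟨0, ?_⟩ ⟨ρ, hρ, rfl⟩
  rintro x ⟨ρ', hρ', rfl⟩
  exact pEnergy_nonneg hσ hρ'.1

lemma IsAdmissible.mono (hρ : IsAdmissible N ρ) (hNN' : ∀ γ e, N γ e ≤ N' γ e) :
    IsAdmissible N' ρ :=
  ⟨hρ.1, fun γ => (hρ.2 γ).trans <|
    sum_le_sum fun e _ => mul_le_mul_of_nonneg_right (hNN' γ e) (hρ.1 e)⟩

lemma convex_setOf_isAdmissible : Convex ℝ {ρ | IsAdmissible N ρ} := by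
  intro ρ₁ h₁ ρ₂ h₂ a b ha hb hab
  refine ⟨fun e => ?_, fun γ => ?_⟩
  · have := h₁.1 e; have := h₂.1 e
    simp only [Pi.add_apply, Pi.smul_apply, smul_eq_mul]
    positivity
  · have hsum : ∑ e, N γ e * (a • ρ₁ + b • ρ₂) e
        = a * ∑ e, N γ e * ρ₁ e + b * ∑ e, N γ e * ρ₂ e := by
      simp only [Pi.add_apply, Pi.smul_apply, smul_eq_mul, mul_sum, ← sum_add_distrib]
      exact sum_congr rfl fun e _ => by ring
    rw [hsum]
    nlinarith [h₁.2 γ, h₂.2 γ]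

lemma isClosed_setOf_isAdmissible :
    IsClosed {q : (Γ → E → ℝ) × (E → ℝ) | IsAdmissible q.1 q.2} := by
  simp only [IsAdmissible, Set.ofPred_and, Set.ofPred_forall]
  refine (isClosed_iInter fun e => isClosed_le continuous_const ?_).inter
    (isClosed_iInter fun γ => isClosed_le continuous_const ?_) <;> fun_prop

lemma continuous_pEnergy (σ : E → ℝ) (hp : 0 ≤ p) : Continuous (pEnergy σ p) :=
  continuous_finsetSum _ fun e _ =>
    continuous_const.mul ((continuous_apply e).rpow_const fun _ => Or.inr hp)

lemma strictConvexOn_pEnergy (hσ : ∀ e, 0 < σ e) (hp : 1 < p) :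
    StrictConvexOn ℝ {ρ : E → ℝ | ∀ e, 0 ≤ ρ e} (pEnergy σ p) := by
  refine ⟨fun ρ₁ h₁ ρ₂ h₂ a b ha hb _ e => ?_, fun ρ₁ h₁ ρ₂ h₂ hne a b ha hb hab => ?_⟩
  · have := h₁ e; have := h₂ e
    simp only [Pi.add_apply, Pi.smul_apply, smul_eq_mul]
    positivity
  obtain ⟨e₀, he₀⟩ := Function.ne_iff.1 hne
  have hrpow := strictConvexOn_rpow hp
  have hsum : a • pEnergy σ p ρ₁ + b • pEnergy σ p ρ₂
      = ∑ e, σ e * (a • ρ₁ e ^ p + b • ρ₂ e ^ p) := by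
    simp only [pEnergy, smul_eq_mul, mul_sum, ← sum_add_distrib]
    exact sum_congr rfl fun e _ => by ring
  rw [hsum]
  refine sum_lt_sum (fun e _ => ?_) ⟨e₀, mem_univ e₀, ?_⟩
  · exact mul_le_mul_of_nonneg_left
      (hrpow.convexOn.2 (Set.mem_Ici.2 (h₁ e)) (Set.mem_Ici.2 (h₂ e)) ha.le hb.le hab)
      (hσ e).le
  · exact mul_lt_mul_of_pos_left
      (hrpow.2 (Set.mem_Ici.2 (h₁ e₀)) (Set.mem_Ici.2 (h₂ e₀)) he₀ ha hb hab) (hσ e₀)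

lemma le_rpow_inv_of_pEnergy_le {M : ℝ} (hσ : ∀ e, 0 < σ e) (hp : 0 < p)
    (hρ : ∀ e, 0 ≤ ρ e) (hM : pEnergy σ p ρ ≤ M) (e : E) : ρ e ≤ (M / σ e) ^ p⁻¹ := by
  have hterm : σ e * ρ e ^ p ≤ M :=
    (single_le_sum (fun e' _ => mul_nonneg (hσ e').le (Real.rpow_nonneg (hρ e') p))
      (mem_univ e)).trans hM
  have hM₀ : 0 ≤ M / σ e :=
    div_nonneg ((mul_nonneg (hσ e).le (Real.rpow_nonneg (hρ e) p)).trans hterm) (hσ e).le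
  rw [← Real.rpow_le_rpow_iff (hρ e) (Real.rpow_nonneg hM₀ _) hp, ← Real.rpow_mul hM₀,
    inv_mul_cancel₀ hp.ne', Real.rpow_one, le_div_iff₀' (hσ e)]
  exact hterm

lemma IsOptimalDensity.eq_of_pEnergy_le (hσ : ∀ e, 0 < σ e) (hp : 1 < p)
    (hρ : IsOptimalDensity N σ p ρ) (hρ' : IsAdmissible N ρ')
    (hle : pEnergy σ p ρ' ≤ pEnergy σ p ρ) : ρ' = ρ := by
  have hmin : IsMinOn (pEnergy σ p) {ρ | IsAdmissible N ρ} ρ := fun ρ'' hρ'' => by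
    rw [Set.mem_ofPred_eq, hρ.2]
    exact pModulus_le_pEnergy (fun e => (hσ e).le) hρ''
  have hconv : StrictConvexOn ℝ {ρ | IsAdmissible N ρ} (pEnergy σ p) :=
    (strictConvexOn_pEnergy hσ hp).subset (fun _ h => h.1) convex_setOf_isAdmissible
  exact hconv.eq_of_isMinOn (fun ρ'' hρ'' => hle.trans (hmin hρ'')) hmin hρ' hρ.1

theorem tendsto_of_isOptimalDensity {ι : Type*} {l : Filter ι} {N : ι → Γ → E → ℝ}
    {N₀ : Γ → E → ℝ} {ρ : ι → E → ℝ} {ρ₀ : E → ℝ} (hσ : ∀ e, 0 < σ e) (hp : 1 < p)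
    (hN : Tendsto N l (𝓝 N₀)) (hρ : ∀ᶠ i in l, IsOptimalDensity (N i) σ p (ρ i))
    (hρ₀ : IsOptimalDensity N₀ σ p ρ₀) (hρ₀_adm : ∀ᶠ i in l, IsAdmissible (N i) ρ₀) :
    Tendsto ρ l (𝓝 ρ₀) := by
  have hp₀ : 0 < p := one_pos.trans hp
  have hbound : ∀ᶠ i in l, pEnergy σ p (ρ i) ≤ pEnergy σ p ρ₀ :=
    (hρ.and hρ₀_adm).mono fun i hi => hi.1.2 ▸ pModulus_le_pEnergy (fun e => (hσ e).le) hi.2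
  have hbox : ∀ᶠ i in l, ρ i ∈ Set.Icc 0 fun e => (pEnergy σ p ρ₀ / σ e) ^ p⁻¹ :=
    (hρ.and hbound).mono fun i hi =>
      ⟨hi.1.1.1, le_rpow_inv_of_pEnergy_le hσ hp₀ hi.1.1.1 hi.2⟩
  refine isCompact_Icc.tendsto_nhds_of_unique_mapClusterPt hbox fun a _ ha => ?_
  obtain ⟨U, hUl, hUa⟩ := mapClusterPt_iff_ultrafilter.1 ha
  have ha_adm : IsAdmissible N₀ a :=
    isClosed_setOf_isAdmissible.mem_of_tendsto ((hN.mono_left hUl).prodMk_nhds hUa)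
      ((hρ.filter_mono hUl).mono fun i hi => hi.1)
  have ha_energy : pEnergy σ p a ≤ pEnergy σ p ρ₀ :=
    le_of_tendsto (((continuous_pEnergy σ hp₀.le).tendsto a).comp hUa) (hbound.filter_mono hUl)
  exact hρ₀.eq_of_pEnergy_le hσ hp ha_adm ha_energy

end Modulus

theorem temporal_optimal_density_tendsto_static_general
    {E Γ : Type*} [Fintype E]
    (Nch : Γ → E → ℝ) (hN01 : ∀ γ e, Nch γ e = 0 ∨ Nch γ e = 1)
    (t : Γ → E → ℝ) (ht : ∀ γ e, Nch γ e = 1 → 0 < t γ e)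
    (φ : ℝ → ℝ) (hφ0 : φ 0 = 1) (hφmono : MonotoneOn φ (Set.Ici 0))
    (hφcont : ContinuousAt φ 0)
    (σ : E → ℝ) (hσ : ∀ e, 0 < σ e)
    (p : ℝ) (hp : 1 < p)
    (ρlam : ℝ → E → ℝ)
    (hρlam : ∀ lam : ℝ, 0 < lam →
      IsAdmissible (fun γ e => φ (lam * t γ e) * Nch γ e) (ρlam lam) ∧
      pEnergy σ p (ρlam lam) = pModulus (fun γ e => φ (lam * t γ e) * Nch γ e) σ p)
    (ρcheck : E → ℝ)
    (hρcheck : IsAdmissible Nch ρcheck ∧ pEnergy σ p ρcheck = pModulus Nch σ p) :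
    Filter.Tendsto ρlam (nhdsWithin 0 (Set.Ioi 0)) (nhds ρcheck) := by
  have hpenalty_tendsto :
      Tendsto (fun lam γ e => φ (lam * t γ e) * Nch γ e) (𝓝[>] 0) (𝓝 Nch) := by
    refine tendsto_pi_nhds.2 fun γ => tendsto_pi_nhds.2 fun e => ?_
    have hlin : Tendsto (fun lam => lam * t γ e) (𝓝[>] 0) (𝓝 0) :=
      ((continuous_id.mul continuous_const).tendsto' 0 0 (zero_mul _)).mono_left
        nhdsWithin_le_nhds
    have hφlim : Tendsto (fun lam => φ (lam * t γ e)) (𝓝[>] 0) (𝓝 1) :=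
      hφ0 ▸ hφcont.tendsto.comp hlin
    simpa using hφlim.mul_const (Nch γ e)
  have hpenalty_ge : ∀ lam > 0, ∀ γ e, Nch γ e ≤ φ (lam * t γ e) * Nch γ e := by
    intro lam hlam γ e
    rcases hN01 γ e with h | h
    · simp [h]
    · have hpos : 0 < lam * t γ e := mul_pos hlam (ht γ e h)
      simpa [h, hφ0] using hφmono Set.self_mem_Ici hpos.le hpos.le
  exact tendsto_of_isOptimalDensity hσ hp hpenalty_tendsto
    (eventually_nhdsWithin_of_forall hρlam) hρcheck
    (eventually_nhdsWithin_of_forall fun lam hlam => hρcheck.1.mono (hpenalty_ge lam hlam))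

/-- convergence of optimal densities as the temporal penalty vanishes:
for `p ∈ (1,∞)`, the unique optimal densities `ρ^λ` converge to the unique optimal density
`ρ̌` of the static problem as `λ → 0⁺`. -/
theorem temporal_optimal_density_tendsto_static
    {E Γ : Type*} [Fintype E] [Fintype Γ] [Nonempty E] [Nonempty Γ]
    (Nch : Γ → E → ℝ) (hN01 : ∀ γ e, Nch γ e = 0 ∨ Nch γ e = 1)
    (hrow : ∀ γ, ∃ e, Nch γ e = 1)
    (t : Γ → E → ℝ) (ht : ∀ γ e, Nch γ e = 1 → 0 < t γ e)
    (φ : ℝ → ℝ) (hφ0 : φ 0 = 1) (hφmono : MonotoneOn φ (Set.Ici 0))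
    (hφcont : ContinuousAt φ 0)
    (σ : E → ℝ) (hσ : ∀ e, 0 < σ e)
    (p : ℝ) (hp : 1 < p)
    (ρlam : ℝ → E → ℝ)
    (hρlam : ∀ lam : ℝ, 0 < lam →
      IsAdmissible (fun γ e => φ (lam * t γ e) * Nch γ e) (ρlam lam) ∧
      pEnergy σ p (ρlam lam) = pModulus (fun γ e => φ (lam * t γ e) * Nch γ e) σ p)
    (ρcheck : E → ℝ)
    (hρcheck : IsAdmissible Nch ρcheck ∧ pEnergy σ p ρcheck = pModulus Nch σ p) :
    Filter.Tendsto ρlam (nhdsWithin 0 (Set.Ioi 0)) (nhds ρcheck) :=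
  temporal_optimal_density_tendsto_static_general Nch hN01 t ht φ hφ0 hφmono hφcont σ hσ p hp ρlam
    hρlam ρcheck hρcheck
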